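/- arXiv:2004.12026 — 2 statements merged into one kernel-verified Lean document; each statement's English description precedes it below -/
import Mathlib

section
/- (Proposition 3.5) Let a, b ∈ C⁰([0,1]), Λ₁ > 0, Λ₂ < 0 constants, and k₁ = k₂ = 0. Assume there exists K > 0 such that √( (e^{2K} − e^{K}) B / (|Λ₂| K) ) · √( (1 − e^{−K}) A / (Λ₁ K) ) < 1, where A = max_{0≤z≤1} |a(z) e^{2Kz}| and B = max_{0≤z≤1} |b(z) e^{−2Kz}|. Then the conditions of Theorem 2.11 hold for the corresponding 2×2 system with k₁ = k₂ = 0; equivalently (by Proposition 6.1), the maximal solution η of η' = |a(x)|/Λ₁ + ( |b(x)|/|Λ₂| ) η², η(0) = 0, exists on all of [0,1]. -/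
open Set
open MeasureTheory intervalIntegral

lemma ftc0 {g : ℝ → ℝ} (hg : Continuous g) (x : ℝ) :
    HasDerivAt (fun y => ∫ t in (0:ℝ)..y, g t) (g x) x :=
  intervalIntegral.integral_hasDerivAt_right (hg.intervalIntegrable _ _)
    (hg.stronglyMeasurableAtFilter _ _) hg.continuousAt

lemma cont_primitive {g : ℝ → ℝ} (hg : Continuous g) :
    Continuous (fun y => ∫ t in (0:ℝ)..y, g t) :=
  continuous_iff_continuousAt.2 fun x => (ftc0 hg x).continuousAt

lemma integral_exp_mul (c : ℝ) (hc : c ≠ 0) (s : ℝ) :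
    ∫ t in (0:ℝ)..s, Real.exp (c*t) = (Real.exp (c*s) - 1)/c := by
  have h : ∀ x ∈ uIcc (0:ℝ) s, HasDerivAt (fun t => Real.exp (c*t)/c) (Real.exp (c*x)) x := by
    intro x _
    have h1 : HasDerivAt (fun t : ℝ => c*t) c x := by
      simpa using (hasDerivAt_id x).const_mul c
    have h2 := (Real.hasDerivAt_exp (c*x)).comp x h1
    have h3 := h2.div_const c
    refine h3.congr_deriv ?_
    field_simp
  rw [intervalIntegral.integral_eq_sub_of_hasDerivAt h
    ((Real.continuous_exp.comp (continuous_const.mul continuous_id)).intervalIntegrable _ _)]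
  simp [sub_div]

lemma mono_aux {f f' : ℝ → ℝ} {d : ℝ} (hd : d ≤ 1)
    (hf : ∀ x ∈ Icc (0:ℝ) 1, HasDerivWithinAt f (f' x) (Icc 0 1) x)
    (h0 : ∀ x ∈ Ioo (0:ℝ) d, 0 ≤ f' x) : MonotoneOn f (Icc 0 d) := by
  rcases le_or_gt d 0 with h | h
  · intro x hx y hy hxy
    have hx0 : x = 0 := le_antisymm (hx.2.trans h) hx.1
    have hy0 : y = 0 := le_antisymm (hy.2.trans h) hy.1
    simp [hx0, hy0]
  · apply monotoneOn_of_deriv_nonneg (convex_Icc 0 d)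
    · intro x hx
      exact ((hf x ((Icc_subset_Icc_right hd) hx)).mono (Icc_subset_Icc_right hd)).continuousWithinAt
    · rw [interior_Icc]
      intro x hx
      have hx1 : x ∈ Icc (0:ℝ) 1 := ⟨hx.1.le, hx.2.le.trans hd⟩
      exact (((hf x hx1).hasDerivAt (Icc_mem_nhds hx.1 (hx.2.trans_le hd))).differentiableAt).differentiableWithinAt
    · rw [interior_Icc]
      intro x hx
      have hx1 : x ∈ Icc (0:ℝ) 1 := ⟨hx.1.le, hx.2.le.trans hd⟩
      rw [((hf x hx1).hasDerivAt (Icc_mem_nhds hx.1 (hx.2.trans_le hd))).deriv]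
      exact h0 x hx

lemma fst_deriv {α : ℝ → ℝ × ℝ} {d : ℝ × ℝ} {s : Set ℝ} {x : ℝ}
    (h : HasDerivWithinAt α d s x) : HasDerivWithinAt (fun y => (α y).1) d.1 s x := by
  have := (h.hasFDerivWithinAt.fst).hasDerivWithinAt
  simpa using this

lemma snd_deriv {α : ℝ → ℝ × ℝ} {d : ℝ × ℝ} {s : Set ℝ} {x : ℝ}
    (h : HasDerivWithinAt α d s x) : HasDerivWithinAt (fun y => (α y).2) d.2 s x := by
  have := (h.hasFDerivWithinAt.snd).hasDerivWithinAt
  simpa using this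

lemma core (p q : ℝ → ℝ) (hpc : Continuous p) (hqc : Continuous q)
    (hp0 : ∀ x, 0 ≤ p x) (hq0 : ∀ x, 0 ≤ q x) (u₀ : ℝ) (hu₀ : 0 ≤ u₀)
    (hint : ∫ s in (0:ℝ)..1, q s * (u₀ + ∫ t in (0:ℝ)..s, p t) < 1) :
    ∃ u v : ℝ → ℝ, u 0 = u₀ ∧ v 0 = 1 ∧
      (∀ x ∈ Icc (0:ℝ) 1, HasDerivWithinAt u (p x * v x) (Icc 0 1) x) ∧
      (∀ x ∈ Icc (0:ℝ) 1, HasDerivWithinAt v (-(q x * u x)) (Icc 0 1) x) ∧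
      (∀ x ∈ Icc (0:ℝ) 1, 0 < v x ∧ v x ≤ 1 ∧ u₀ ≤ u x ∧
        u x ≤ u₀ + ∫ t in (0:ℝ)..x, p t) := by
  classical
  set w : ℝ → ℝ := fun x => u₀ + ∫ t in (0:ℝ)..x, p t with hw_def
  have hw : ∀ x, HasDerivAt w (p x) x := fun x => (ftc0 hpc x).const_add u₀
  have hwc : Continuous w := continuous_const.add (cont_primitive hpc)
  have hwmono : Monotone w := by
    apply monotone_of_deriv_nonneg (fun x => (hw x).differentiableAt)
    intro x; rw [(hw x).deriv]; exact hp0 x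
  have hw0 : w 0 = u₀ := by simp [hw_def]
  have hw_nonneg : ∀ x, 0 ≤ x → u₀ ≤ w x := fun x hx => hw0 ▸ hwmono hx
  set R₀ : ℝ := w 1 + 1 with hR₀_def
  have hR₀u : u₀ + 1 ≤ R₀ := by
    have := hw_nonneg 1 zero_le_one; linarith
  have hR₀1 : 1 ≤ R₀ := by linarith
  have hwleR : ∀ x, x ≤ 1 → w x ≤ R₀ := fun x hx => by
    have := hwmono hx; linarith
  -- clamping
  set cl : ℝ → ℝ := fun t => max (-R₀) (min R₀ t) with hcl_def
  have hcl_eq : ∀ t, -R₀ ≤ t → t ≤ R₀ → cl t = t := by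
    intro t h1 h2
    simp only [hcl_def]
    rw [min_eq_right h2, max_eq_right h1]
  have hcl_nonneg : ∀ t, 0 ≤ t → 0 ≤ cl t := by
    intro t ht
    simp only [hcl_def]
    exact le_max_of_le_right (le_min (by linarith) ht)
  have hcl_le : ∀ t, cl t ≤ R₀ := by
    intro t
    simp only [hcl_def]
    exact max_le (by linarith) (min_le_left _ _)
  have hcl_ge : ∀ t, -R₀ ≤ cl t := fun t => le_max_left _ _
  have hcl_abs : ∀ t, |cl t| ≤ R₀ := fun t => abs_le.2 ⟨hcl_ge t, hcl_le t⟩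
  have hcl_lip : LipschitzWith 1 cl := (LipschitzWith.id.const_min R₀).const_max (-R₀)
  -- bounds on p q
  obtain ⟨Mp, hMp⟩ := (isCompact_Icc (a := (0:ℝ)) (b := 1)).exists_bound_of_continuousOn
    hpc.continuousOn
  obtain ⟨Mq, hMq⟩ := (isCompact_Icc (a := (0:ℝ)) (b := 1)).exists_bound_of_continuousOn
    hqc.continuousOn
  set M : ℝ := max Mp Mq with hM_def
  have hM0 : 0 ≤ M := le_trans (norm_nonneg (p 0)) ((hMp 0 (by norm_num)).trans (le_max_left _ _))
  have hMp' : ∀ t ∈ Icc (0:ℝ) 1, |p t| ≤ M := fun t ht => (hMp t ht).trans (le_max_left _ _)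
  have hMq' : ∀ t ∈ Icc (0:ℝ) 1, |q t| ≤ M := fun t ht => (hMq t ht).trans (le_max_right _ _)
  -- the vector field
  set F : ℝ → ℝ × ℝ → ℝ × ℝ := fun t z => (p t * cl z.2, -(q t * cl z.1)) with hF_def
  have hR0pos : (0:ℝ) ≤ M * R₀ := mul_nonneg hM0 (by linarith)
  have hpl : IsPicardLindelof F (tmin := 0) (tmax := 1) ⟨0, by norm_num⟩ (u₀, 1) (M * R₀).toNNReal 0
      (M * R₀).toNNReal M.toNNReal := by
    constructor
    · intro t ht
      apply LipschitzWith.lipschitzOnWith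
      apply LipschitzWith.of_dist_le_mul
      intro z z'
      rw [Prod.dist_eq]
      have hcoe : (M.toNNReal : ℝ) = M := Real.coe_toNNReal _ hM0
      rw [hcoe]
      have h1 : dist (F t z).1 (F t z').1 ≤ M * dist z z' := by
        simp only [hF_def, Real.dist_eq]
        rw [← mul_sub, abs_mul]
        calc |p t| * |cl z.2 - cl z'.2| ≤ M * |z.2 - z'.2| := by
              apply mul_le_mul (hMp' t ht) ?_ (abs_nonneg _) hM0
              have := hcl_lip.dist_le_mul z.2 z'.2
              simpa [Real.dist_eq] using this
          _ ≤ M * dist z z' := by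
              apply mul_le_mul_of_nonneg_left ?_ hM0
              rw [← Real.dist_eq]
              exact (le_max_right _ _).trans (le_of_eq (Prod.dist_eq (x := z) (y := z')).symm)
      have h2 : dist (F t z).2 (F t z').2 ≤ M * dist z z' := by
        simp only [hF_def, Real.dist_eq]
        have he : -(q t * cl z.1) - -(q t * cl z'.1) = q t * (cl z'.1 - cl z.1) := by ring
        rw [he, abs_mul]
        calc |q t| * |cl z'.1 - cl z.1| ≤ M * |z'.1 - z.1| := by
              apply mul_le_mul (hMq' t ht) ?_ (abs_nonneg _) hM0
              have := hcl_lip.dist_le_mul z'.1 z.1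
              simpa [Real.dist_eq] using this
          _ ≤ M * dist z z' := by
              apply mul_le_mul_of_nonneg_left ?_ hM0
              rw [← Real.dist_eq, dist_comm]
              exact (le_max_left _ _).trans (le_of_eq (Prod.dist_eq (x := z) (y := z')).symm)
      exact max_le h1 h2
    · intro z _
      apply Continuous.continuousOn
      exact ((hpc.mul continuous_const).prodMk ((hqc.mul continuous_const).neg))
    · intro t ht z _
      rw [Real.coe_toNNReal _ hR0pos, Prod.norm_def]
      apply max_le
      · simp only [hF_def, Real.norm_eq_abs, abs_mul]
        exact mul_le_mul (hMp' t ht) (hcl_abs _) (abs_nonneg _) hM0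
      · simp only [hF_def, Real.norm_eq_abs, abs_neg, abs_mul]
        exact mul_le_mul (hMq' t ht) (hcl_abs _) (abs_nonneg _) hM0
    · simp
  obtain ⟨α, hα0', hαd⟩ := hpl.exists_eq_forall_mem_Icc_hasDerivWithinAt₀
  have hα0 : α 0 = (u₀, 1) := hα0'
  set u : ℝ → ℝ := fun x => (α x).1 with hu_def
  set v : ℝ → ℝ := fun x => (α x).2 with hv_def
  have hu0 : u 0 = u₀ := by simp only [hu_def, hα0]
  have hv0 : v 0 = 1 := by simp only [hv_def, hα0]
  have hud : ∀ x ∈ Icc (0:ℝ) 1, HasDerivWithinAt u (p x * cl (v x)) (Icc 0 1) x :=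
    fun x hx => fst_deriv (hαd x hx)
  have hvd : ∀ x ∈ Icc (0:ℝ) 1, HasDerivWithinAt v (-(q x * cl (u x))) (Icc 0 1) x :=
    fun x hx => snd_deriv (hαd x hx)
  -- bootstrap
  have key : ∀ T, T ∈ Icc (0:ℝ) 1 → (∀ x ∈ Ico (0:ℝ) T, 0 < v x) →
      (∀ x ∈ Icc (0:ℝ) T, u₀ ≤ u x ∧ u x ≤ w x ∧ v x ≤ 1) ∧
        1 - (∫ s in (0:ℝ)..1, q s * w s) ≤ v T := by
    intro T hT hvpos
    have h0T : (0:ℝ) ∈ Icc (0:ℝ) T := ⟨le_refl _, hT.1⟩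
    -- u monotone
    have humono : MonotoneOn u (Icc 0 T) := by
      apply mono_aux hT.2 hud
      intro x hx
      exact mul_nonneg (hp0 x) (hcl_nonneg _ (hvpos x ⟨hx.1.le, hx.2⟩).le)
    have hu_lb : ∀ x ∈ Icc (0:ℝ) T, u₀ ≤ u x := by
      intro x hx
      rw [← hu0]
      exact humono h0T hx hx.1
    -- v antitone
    have hvanti : MonotoneOn (fun x => -v x) (Icc 0 T) := by
      apply mono_aux hT.2 (f' := fun x => q x * cl (u x))
      · intro x hx
        have := (hvd x hx).neg
        rw [neg_neg] at this
        exact this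
      · intro x hx
        exact mul_nonneg (hq0 x)
          (hcl_nonneg _ ((hu₀.trans (hu_lb x ⟨hx.1.le, hx.2.le⟩))))
    have hv_ub : ∀ x ∈ Icc (0:ℝ) T, v x ≤ 1 := by
      intro x hx
      have := hvanti h0T hx hx.1
      simp only [neg_le_neg_iff] at this
      rw [← hv0]; linarith
    -- u ≤ w
    have hwu : MonotoneOn (fun x => w x - u x) (Icc 0 T) := by
      apply mono_aux hT.2 (f' := fun x => p x - p x * cl (v x))
      · intro x hx
        exact ((hw x).hasDerivWithinAt).sub (hud x hx)
      · intro x hx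
        have hvx := hvpos x ⟨hx.1.le, hx.2⟩
        have hvx1 := hv_ub x ⟨hx.1.le, hx.2.le⟩
        have h1 : cl (v x) ≤ 1 := by
          rw [hcl_eq (v x) (by linarith) (by linarith)]; exact hvx1
        have h2 : 0 ≤ cl (v x) := hcl_nonneg _ hvx.le
        nlinarith [hp0 x]
    have hu_ub : ∀ x ∈ Icc (0:ℝ) T, u x ≤ w x := by
      intro x hx
      have h := hwu h0T hx hx.1
      simp only [hw0, hu0, sub_self] at h
      linarith
    refine ⟨fun x hx => ⟨hu_lb x hx, hu_ub x hx, hv_ub x hx⟩, ?_⟩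
    -- v T lower bound
    have hcl_u : ∀ x ∈ Icc (0:ℝ) T, cl (u x) = u x := by
      intro x hx
      apply hcl_eq
      · have := hu_lb x hx; linarith
      · exact ((hu_ub x hx).trans (hwleR x (hx.2.trans hT.2)))
    have hz : MonotoneOn (fun x => v x + ∫ s in (0:ℝ)..x, q s * w s) (Icc 0 T) := by
      apply mono_aux hT.2 (f' := fun x => -(q x * cl (u x)) + q x * w x)
      · intro x hx
        exact (hvd x hx).add ((ftc0 (hqc.mul hwc) x).hasDerivWithinAt)
      · intro x hx
        rw [hcl_u x ⟨hx.1.le, hx.2.le⟩]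
        have := hu_ub x ⟨hx.1.le, hx.2.le⟩
        nlinarith [hq0 x]
    have hzT := hz h0T ⟨hT.1, le_refl T⟩ hT.1
    simp only [intervalIntegral.integral_same, add_zero, hv0] at hzT
    have hsplit : ∫ s in (0:ℝ)..T, q s * w s ≤ ∫ s in (0:ℝ)..1, q s * w s := by
      have hi1 : IntervalIntegrable (fun s => q s * w s) volume 0 T :=
        (hqc.mul hwc).intervalIntegrable _ _
      have hi2 : IntervalIntegrable (fun s => q s * w s) volume T 1 :=
        (hqc.mul hwc).intervalIntegrable _ _
      rw [← intervalIntegral.integral_add_adjacent_intervals hi1 hi2]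
      have : 0 ≤ ∫ s in T..1, q s * w s := by
        apply intervalIntegral.integral_nonneg hT.2
        intro s hs
        have hs0 : (0:ℝ) ≤ s := hT.1.trans hs.1
        exact mul_nonneg (hq0 s) (hu₀.trans (hw_nonneg s hs0))
      linarith
    linarith
  -- positivity of v everywhere
  have hvcont : ContinuousOn v (Icc 0 1) := fun x hx => (hvd x hx).continuousWithinAt
  have hvpos : ∀ x ∈ Icc (0:ℝ) 1, 0 < v x := by
    by_contra hcon
    push_neg at hcon
    obtain ⟨x₁, hx₁, hvx₁⟩ := hcon
    set S : Set ℝ := {x | x ∈ Icc (0:ℝ) 1 ∧ v x ≤ 0} with hS_def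
    have hSne : S.Nonempty := ⟨x₁, hx₁, hvx₁⟩
    have hSbdd : BddBelow S := ⟨0, fun x hx => hx.1.1⟩
    have hSclosed : IsClosed S := by
      have : S = Icc 0 1 ∩ v ⁻¹' (Iic 0) := by
        ext x; simp [hS_def, and_comm]
      rw [this]
      exact ContinuousOn.preimage_isClosed_of_isClosed hvcont isClosed_Icc isClosed_Iic
    set t₀ : ℝ := sInf S with ht₀_def
    have ht₀S : t₀ ∈ S := hSclosed.csInf_mem hSne hSbdd
    have ht₀Icc : t₀ ∈ Icc (0:ℝ) 1 := ht₀S.1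
    have hvlt : ∀ x ∈ Ico (0:ℝ) t₀, 0 < v x := by
      intro x hx
      by_contra hvx
      push_neg at hvx
      have : x ∈ S := ⟨⟨hx.1, hx.2.le.trans ht₀Icc.2⟩, hvx⟩
      have := csInf_le hSbdd this
      exact absurd this (not_le.2 hx.2)
    have hkey := (key t₀ ht₀Icc hvlt).2
    have hvt₀ : v t₀ ≤ 0 := ht₀S.2
    have hint' : (∫ s in (0:ℝ)..1, q s * w s) < 1 := hint
    linarith
  have hfinal := (key 1 (by norm_num) (fun x hx => hvpos x ⟨hx.1, hx.2.le⟩)).1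
  have hcl_v : ∀ x ∈ Icc (0:ℝ) 1, cl (v x) = v x := by
    intro x hx
    apply hcl_eq
    · have := hvpos x hx; linarith
    · exact ((hfinal x hx).2.2).trans (by linarith)
  have hcl_u : ∀ x ∈ Icc (0:ℝ) 1, cl (u x) = u x := by
    intro x hx
    apply hcl_eq
    · have := (hfinal x hx).1; linarith
    · exact ((hfinal x hx).2.1).trans (hwleR x hx.2)
  refine ⟨u, v, hu0, hv0, ?_, ?_, ?_⟩
  · intro x hx
    have := hud x hx
    rwa [hcl_v x hx] at this
  · intro x hx
    have := hvd x hx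
    rwa [hcl_u x hx] at this
  · intro x hx
    exact ⟨hvpos x hx, (hfinal x hx).2.2, (hfinal x hx).1, (hfinal x hx).2.1⟩

-- numeric key lemma
lemma numeric_key {A B L1 L2 K : ℝ} (hA : 0 ≤ A) (hB : 0 ≤ B) (h1 : 0 < L1) (h2 : 0 < L2)
    (hK : 0 < K) (hprod : A*B*(Real.exp K - 1)^2 < L1*L2*K^2) :
    0 ≤ A*B/(2*K*(L1*L2)) * ((Real.exp ((2*K)*1) - 1)/(2*K) - 1) ∧
      A*B/(2*K*(L1*L2)) * ((Real.exp ((2*K)*1) - 1)/(2*K) - 1) < 1 := by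
  set E := Real.exp K with hE_def
  have hEpos : 0 < E := Real.exp_pos K
  have hE2 : Real.exp ((2*K)*1) = E^2 := by
    rw [hE_def, ← Real.exp_nat_mul]
    norm_num
  have hE1 : 1 + K ≤ E := by
    have := Real.add_one_le_exp K
    linarith
  have hEK : E - E*K ≤ 1 := by
    have h := Real.add_one_le_exp (-K)
    have h2 : E * Real.exp (-K) = 1 := by
      rw [hE_def, ← Real.exp_add]; simp
    nlinarith [h, hEpos]
  have hkey : E^2 - 1 - 2*K ≤ 4*(E-1)^2 := by
    nlinarith [mul_nonneg (sq_nonneg (E-1)) (by nlinarith : (0:ℝ) ≤ 3*E-2), hEK, hEpos]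
  have hnum0 : 0 ≤ E^2 - 1 - 2*K := by nlinarith
  have hden : 0 < 2*K*(L1*L2) * (2*K) := by positivity
  have heq : A*B/(2*K*(L1*L2)) * ((E^2 - 1)/(2*K) - 1) =
      A*B*(E^2 - 1 - 2*K) / (2*K*(L1*L2)*(2*K)) := by
    field_simp
  rw [hE2, heq]
  constructor
  · positivity
  · rw [div_lt_one hden]
    have : A*B*(E^2-1-2*K) ≤ A*B*(4*(E-1)^2) :=
      mul_le_mul_of_nonneg_left hkey (by positivity)
    nlinarith

lemma hprod_of_hKK {A B L1 L2 K : ℝ} (hA : 0 ≤ A) (hB : 0 ≤ B) (h1 : 0 < L1) (h2 : 0 < L2)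
    (hK : 0 < K)
    (hKK : Real.sqrt ((Real.exp (2*K) - Real.exp K) * B / (L2*K)) *
      Real.sqrt ((1 - Real.exp (-K)) * A / (L1*K)) < 1) :
    A*B*(Real.exp K - 1)^2 < L1*L2*K^2 := by
  have hexpK : Real.exp K ≤ Real.exp (2*K) := Real.exp_le_exp.2 (by linarith)
  have hexpneg : Real.exp (-K) ≤ 1 := by
    rw [show (1:ℝ) = Real.exp 0 by simp]
    exact Real.exp_le_exp.2 (by linarith)
  have hX0 : 0 ≤ (Real.exp (2*K) - Real.exp K) * B / (L2*K) :=
    div_nonneg (mul_nonneg (by linarith) hB) (by positivity)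
  have hY0 : 0 ≤ (1 - Real.exp (-K)) * A / (L1*K) :=
    div_nonneg (mul_nonneg (by linarith) hA) (by positivity)
  have hXY : ((Real.exp (2*K) - Real.exp K) * B / (L2*K)) *
      ((1 - Real.exp (-K)) * A / (L1*K)) < 1 := by
    have hs1 := Real.sqrt_nonneg ((Real.exp (2*K) - Real.exp K) * B / (L2*K))
    have hs2 := Real.sqrt_nonneg ((1 - Real.exp (-K)) * A / (L1*K))
    have e1 := Real.sq_sqrt hX0
    have e2 := Real.sq_sqrt hY0
    calc ((Real.exp (2*K) - Real.exp K) * B / (L2*K)) * ((1 - Real.exp (-K)) * A / (L1*K))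
        = (Real.sqrt ((Real.exp (2*K) - Real.exp K) * B / (L2*K)) *
            Real.sqrt ((1 - Real.exp (-K)) * A / (L1*K)))^2 := by rw [mul_pow, e1, e2]
      _ < 1 := by nlinarith [hKK, mul_nonneg hs1 hs2]
  have hden : 0 < (L2*K)*(L1*K) := by positivity
  rw [div_mul_div_comm, div_lt_one hden] at hXY
  have hED : Real.exp (2*K) = Real.exp K * Real.exp K := by
    rw [← Real.exp_add]; ring_nf
  have hei : Real.exp K * Real.exp (-K) = 1 := by
    rw [← Real.exp_add]; simp
  have hident : (Real.exp (2*K) - Real.exp K)*B*((1-Real.exp (-K))*A) =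
      A*B*(Real.exp K - 1)^2 := by
    rw [hED]
    linear_combination (A*B*(1-Real.exp K)) * hei
  rw [hident] at hXY
  have : (L2*K)*(L1*K) = L1*L2*K^2 := by ring
  linarith

lemma sup_bd {f : ℝ → ℝ} (hf : ContinuousOn f (Icc 0 1)) (c : ℝ) :
    (∀ x ∈ Icc (0:ℝ) 1, |f x| ≤ (⨆ z : Icc (0:ℝ) 1, |f z * Real.exp (c * z)|) *
      Real.exp (-(c * x))) ∧
    0 ≤ ⨆ z : Icc (0:ℝ) 1, |f z * Real.exp (c * z)| := by
  have hg : Continuous (fun z : Icc (0:ℝ) 1 => |f z * Real.exp (c * z)|) := by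
    apply Continuous.abs
    exact (hf.restrict).mul ((Real.continuous_exp.comp (continuous_const.mul continuous_id)).comp
      continuous_subtype_val)
  have hbdd : BddAbove (range fun z : Icc (0:ℝ) 1 => |f z * Real.exp (c * z)|) :=
    (isCompact_range hg).bddAbove
  have hle : ∀ x (hx : x ∈ Icc (0:ℝ) 1),
      |f x * Real.exp (c * x)| ≤ ⨆ z : Icc (0:ℝ) 1, |f z * Real.exp (c * z)| := by
    intro x hx
    exact le_ciSup hbdd ⟨x, hx⟩
  constructor
  · intro x hx
    have h := hle x hx
    rw [abs_mul, abs_of_pos (Real.exp_pos _)] at h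
    have hepos : 0 < Real.exp (c*x) := Real.exp_pos _
    have : |f x| = |f x| * Real.exp (c*x) * Real.exp (-(c*x)) := by
      rw [mul_assoc, ← Real.exp_add]; simp
    rw [this]
    exact mul_le_mul_of_nonneg_right h (le_of_lt (Real.exp_pos _))
  · exact le_trans (abs_nonneg _) (hle 0 (by norm_num))

lemma int_bound {φ : ℝ → ℝ} {c C : ℝ} (hφ : Continuous φ) (hc : c ≠ 0)
    (hφ0 : ∀ t, 0 ≤ φ t)
    (hbd : ∀ t ∈ Icc (0:ℝ) 1, φ t ≤ C * Real.exp (c*t)) :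
    ∀ s ∈ Icc (0:ℝ) 1, (0 ≤ ∫ t in (0:ℝ)..s, φ t) ∧
      (∫ t in (0:ℝ)..s, φ t) ≤ C * ((Real.exp (c*s) - 1)/c) := by
  intro s hs
  constructor
  · exact intervalIntegral.integral_nonneg hs.1 (fun t _ => hφ0 t)
  · have h1 : (∫ t in (0:ℝ)..s, φ t) ≤ ∫ t in (0:ℝ)..s, C * Real.exp (c*t) := by
      apply intervalIntegral.integral_mono_on hs.1 (hφ.intervalIntegrable _ _)
        ((continuous_const.mul (Real.continuous_exp.comp
          (continuous_const.mul continuous_id))).intervalIntegrable _ _)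
      intro t ht
      exact hbd t ⟨ht.1, ht.2.trans hs.2⟩
    rwa [intervalIntegral.integral_const_mul, integral_exp_mul c hc] at h1

lemma sup_bd' {f g : ℝ → ℝ} (hf : ContinuousOn f (Icc 0 1)) (hg : Continuous g) :
    (∀ x ∈ Icc (0:ℝ) 1, |f x| ≤ (⨆ z : Icc (0:ℝ) 1, |f z * Real.exp (g z)|) *
      Real.exp (-(g x))) ∧
    0 ≤ ⨆ z : Icc (0:ℝ) 1, |f z * Real.exp (g z)| := by
  have hgc : Continuous (fun z : Icc (0:ℝ) 1 => |f z * Real.exp (g z)|) := by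
    apply Continuous.abs
    exact (hf.restrict).mul ((Real.continuous_exp.comp hg).comp continuous_subtype_val)
  have hbdd : BddAbove (range fun z : Icc (0:ℝ) 1 => |f z * Real.exp (g z)|) :=
    (isCompact_range hgc).bddAbove
  have hle : ∀ x, ∀ hx : x ∈ Icc (0:ℝ) 1,
      |f x * Real.exp (g x)| ≤ ⨆ z : Icc (0:ℝ) 1, |f z * Real.exp (g z)| := by
    intro x hx
    exact le_ciSup hbdd ⟨x, hx⟩
  constructor
  · intro x hx
    have h := hle x hx
    rw [abs_mul, abs_of_pos (Real.exp_pos _)] at h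
    have heq : |f x| = |f x| * Real.exp (g x) * Real.exp (-(g x)) := by
      rw [mul_assoc, ← Real.exp_add]; simp
    rw [heq]
    exact mul_le_mul_of_nonneg_right h (le_of_lt (Real.exp_pos _))
  · exact le_trans (abs_nonneg _) (hle 0 (by norm_num))

/-- The conditions of Theorem 2.11 specialized to the 2×2 linear hyperbolic system on `[0,1]`. -/
def Cond211 (Λ₁ Λ₂ : ℝ) (a b : ℝ → ℝ) (k₁ k₂ : ℝ) : Prop :=
  ∃ f₁ f₂ f₁' f₂' : ℝ → ℝ,
    ContinuousOn f₁' (Icc 0 1) ∧ ContinuousOn f₂' (Icc 0 1) ∧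
    (∀ x ∈ Icc (0 : ℝ) 1, HasDerivWithinAt f₁ (f₁' x) (Icc 0 1) x) ∧
    (∀ x ∈ Icc (0 : ℝ) 1, HasDerivWithinAt f₂ (f₂' x) (Icc 0 1) x) ∧
    (∀ x ∈ Icc (0 : ℝ) 1, 0 < f₁ x ∧ 0 < f₂ x) ∧
    (∀ x ∈ Icc (0 : ℝ) 1, Λ₁ * f₁' x ≤ -2 * |a x| * f₁ x ^ ((3 : ℝ) / 2) / Real.sqrt (f₂ x)) ∧
    (∀ x ∈ Icc (0 : ℝ) 1, Λ₂ * f₂' x ≤ -2 * |b x| * f₂ x ^ ((3 : ℝ) / 2) / Real.sqrt (f₁ x)) ∧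
    ∃ Δ₁ Δ₂ : ℝ, 0 < Δ₁ ∧ 0 < Δ₂ ∧
      max (|k₁| * Δ₁ / Δ₂) (|k₂| * Δ₂ / Δ₁) <
        min (f₁ 1 / Δ₁ ^ 2) (f₂ 0 / Δ₂ ^ 2) / max (f₁ 0 / Δ₁ ^ 2) (f₂ 1 / Δ₂ ^ 2)

set_option maxHeartbeats 1000000 in
/-- (Proposition 3.5) Let `a, b ∈ C⁰([0,1])`, `Λ₁ > 0 > Λ₂` constants and `k₁ = k₂ = 0`.
If there is `K > 0` with `√((e^{2K} - e^K) B/(|Λ₂| K)) · √((1 - e^{-K}) A/(Λ₁ K)) < 1`, where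
`A = max_{0≤z≤1} |a(z) e^{2Kz}|` and `B = max_{0≤z≤1} |b(z) e^{-2Kz}|`, then the conditions of
Theorem 2.11 hold for the 2×2 system with `k₁ = k₂ = 0`; equivalently, the maximal solution
`η` of `η' = |a(x)|/Λ₁ + (|b(x)|/|Λ₂|) η²`, `η(0) = 0`, exists on all of `[0,1]`. -/
theorem prop_3_5 (Λ₁ Λ₂ K : ℝ) (a b : ℝ → ℝ) (hΛ₁ : 0 < Λ₁) (hΛ₂ : Λ₂ < 0)
    (ha : ContinuousOn a (Icc 0 1)) (hb : ContinuousOn b (Icc 0 1)) (hK : 0 < K)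
    (hKK : Real.sqrt ((Real.exp (2 * K) - Real.exp K) *
          (⨆ z : Icc (0 : ℝ) 1, |b z * Real.exp (-(2 * K * z))|) / (|Λ₂| * K)) *
        Real.sqrt ((1 - Real.exp (-K)) *
          (⨆ z : Icc (0 : ℝ) 1, |a z * Real.exp (2 * K * z)|) / (Λ₁ * K)) < 1) :
    Cond211 Λ₁ Λ₂ a b 0 0 ∧
      ∃ η : ℝ → ℝ, η 0 = 0 ∧
        ∀ x ∈ Icc (0 : ℝ) 1,
          HasDerivWithinAt η (|a x| / Λ₁ + (|b x| / |Λ₂|) * η x ^ 2) (Icc 0 1) x := by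
  classical
  have h01 : (0:ℝ) ≤ 1 := zero_le_one
  have hΛ₂' : 0 < |Λ₂| := abs_pos.2 (ne_of_lt hΛ₂)
  have hΛ₁' : Λ₁ ≠ 0 := ne_of_gt hΛ₁
  have hΛ₂'' : |Λ₂| ≠ 0 := ne_of_gt hΛ₂'
  have hK' : (2*K) ≠ 0 := by positivity
  have hK'' : (-(2*K)) ≠ 0 := by simp; positivity
  -- extensions
  set ae : ℝ → ℝ := IccExtend h01 ((Icc (0:ℝ) 1).restrict a) with hae_def
  set be : ℝ → ℝ := IccExtend h01 ((Icc (0:ℝ) 1).restrict b) with hbe_def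
  have hae_cont : Continuous ae := ha.restrict.Icc_extend'
  have hbe_cont : Continuous be := hb.restrict.Icc_extend'
  have hae_eq : ∀ x ∈ Icc (0:ℝ) 1, ae x = a x := by
    intro x hx; rw [hae_def, IccExtend_of_mem h01 _ hx]; rfl
  have hbe_eq : ∀ x ∈ Icc (0:ℝ) 1, be x = b x := by
    intro x hx; rw [hbe_def, IccExtend_of_mem h01 _ hx]; rfl
  set p₁ : ℝ → ℝ := fun x => |ae x| / Λ₁ with hp₁_def
  set q₁ : ℝ → ℝ := fun x => |be x| / |Λ₂| with hq₁_def
  have hp₁c : Continuous p₁ := (hae_cont.abs).div_const _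
  have hq₁c : Continuous q₁ := (hbe_cont.abs).div_const _
  have hp₁0 : ∀ x, 0 ≤ p₁ x := fun x => div_nonneg (abs_nonneg _) hΛ₁.le
  have hq₁0 : ∀ x, 0 ≤ q₁ x := fun x => div_nonneg (abs_nonneg _) hΛ₂'.le
  -- sup bounds
  set A := ⨆ z : Icc (0:ℝ) 1, |a z * Real.exp (2 * K * z)| with hA_def
  set B := ⨆ z : Icc (0:ℝ) 1, |b z * Real.exp (-(2 * K * z))| with hB_def
  obtain ⟨ha_bd, hA0⟩ := sup_bd' (g := fun z => 2 * K * z) ha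
    (continuous_const.mul continuous_id)
  obtain ⟨hb_bd, hB0⟩ := sup_bd' (g := fun z => -(2 * K * z)) hb
    (continuous_const.mul continuous_id).neg
  have hp₁_bd : ∀ t ∈ Icc (0:ℝ) 1, p₁ t ≤ A/Λ₁ * Real.exp ((-(2*K))*t) := by
    intro t ht
    have h := ha_bd t ht
    have he : A / Λ₁ * Real.exp ((-(2*K))*t) * Λ₁ = A * Real.exp (-(2*K*t)) := by
      rw [show (-(2*K))*t = -(2*K*t) by ring]; field_simp
    simp only [hp₁_def]
    rw [hae_eq t ht, div_le_iff₀ hΛ₁, he]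
    exact h
  have hq₁_bd : ∀ t ∈ Icc (0:ℝ) 1, q₁ t ≤ B/|Λ₂| * Real.exp ((2*K)*t) := by
    intro t ht
    have h := hb_bd t ht
    have he : B / abs Λ₂ * Real.exp ((2*K)*t) * abs Λ₂ = B * Real.exp (-(-(2*K*t))) := by
      rw [show (2*K)*t = -(-(2*K*t)) by ring]; field_simp
    simp only [hq₁_def]
    rw [hbe_eq t ht, div_le_iff₀ hΛ₂', he]
    exact h
  -- numeric facts
  have hprod : A*B*(Real.exp K - 1)^2 < Λ₁ * |Λ₂| *K^2 :=
    hprod_of_hKK hA0 hB0 hΛ₁ hΛ₂' hK hKK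
  obtain ⟨hJ0, hJ1⟩ := numeric_key hA0 hB0 hΛ₁ hΛ₂' hK hprod
  set J := A*B/(2*K*(Λ₁ * |Λ₂|)) * ((Real.exp ((2*K)*1) - 1)/(2*K) - 1) with hJ_def
  -- the majorant G and its integral
  set G : ℝ → ℝ := fun s => A*B/(2*K*(Λ₁ * |Λ₂|)) * (Real.exp ((2*K)*s) - 1) with hG_def
  have hGc : Continuous G := continuous_const.mul ((Real.continuous_exp.comp
    (continuous_const.mul continuous_id)).sub continuous_const)
  have hie : IntervalIntegrable (fun s : ℝ => Real.exp ((2*K)*s)) volume 0 1 :=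
    ((by fun_prop : Continuous fun s : ℝ => Real.exp ((2*K)*s))).intervalIntegrable _ _
  have hGint : (∫ s in (0:ℝ)..1, G s) = J := by
    rw [hG_def]
    rw [intervalIntegral.integral_const_mul]
    rw [hJ_def]
    congr 1
    rw [intervalIntegral.integral_sub hie intervalIntegrable_const,
      integral_exp_mul (2*K) hK']
    simp
  -- SYSTEM 1
  have hint₁ : (∫ s in (0:ℝ)..1, q₁ s * ((0:ℝ) + ∫ t in (0:ℝ)..s, p₁ t)) < 1 := by
    have hIb := int_bound hp₁c hK'' hp₁0 hp₁_bd
    have hptw : ∀ s ∈ Icc (0:ℝ) 1, q₁ s * ((0:ℝ) + ∫ t in (0:ℝ)..s, p₁ t) ≤ G s := by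
      intro s hs
      obtain ⟨hI0, hIle⟩ := hIb s hs
      rw [zero_add]
      have h1 := hq₁_bd s hs
      have hX1 : (0:ℝ) ≤ B/|Λ₂| * Real.exp ((2*K)*s) := by positivity
      have hmul := mul_le_mul h1 hIle hI0 hX1
      refine hmul.trans (le_of_eq ?_)
      have hEmE : Real.exp (2*K*s) * Real.exp (-(2*K*s)) = 1 := by
        rw [← Real.exp_add, show 2*K*s + -(2*K*s) = 0 by ring, Real.exp_zero]
      have hre : Real.exp ((-(2*K))*s) = Real.exp (-(2*K*s)) := by congr 1; ring
      rw [hG_def, hre]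
      field_simp
      linear_combination (-(A*B)) * hEmE
    calc (∫ s in (0:ℝ)..1, q₁ s * ((0:ℝ) + ∫ t in (0:ℝ)..s, p₁ t))
        ≤ ∫ s in (0:ℝ)..1, G s := by
          apply intervalIntegral.integral_mono_on h01
            ((hq₁c.mul (continuous_const.add (cont_primitive hp₁c))).intervalIntegrable _ _)
            (hGc.intervalIntegrable _ _) hptw
      _ = J := hGint
      _ < 1 := hJ1
  obtain ⟨u, v, hu0, hv0, hud, hvd, hbounds⟩ :=
    core p₁ q₁ hp₁c hq₁c hp₁0 hq₁0 0 (le_refl 0) hint₁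
  -- η
  have hηpart : ∃ η : ℝ → ℝ, η 0 = 0 ∧
      ∀ x ∈ Icc (0 : ℝ) 1,
        HasDerivWithinAt η (|a x| / Λ₁ + (|b x| / |Λ₂|) * η x ^ 2) (Icc 0 1) x := by
    refine ⟨fun x => u x / v x, by show u 0 / v 0 = 0; rw [hu0, hv0]; simp, ?_⟩
    intro x hx
    have hvpos := (hbounds x hx).1
    have hd := (hud x hx).div (hvd x hx) (ne_of_gt hvpos)
    have heq : (p₁ x * v x * v x - u x * -(q₁ x * u x)) / v x ^ 2
        = |a x| / Λ₁ + |b x| / |Λ₂| * (u x / v x) ^ 2 := by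
      simp only [hp₁_def, hq₁_def]
      rw [hae_eq x hx, hbe_eq x hx]
      field_simp
      ring
    rw [heq] at hd
    exact hd
  -- SYSTEM 2
  set p₂ : ℝ → ℝ := fun x => q₁ (1-x) with hp₂_def
  set q₂ : ℝ → ℝ := fun x => p₁ (1-x) with hq₂_def
  have hp₂c : Continuous p₂ := hq₁c.comp (continuous_const.sub continuous_id)
  have hq₂c : Continuous q₂ := hp₁c.comp (continuous_const.sub continuous_id)
  have hp₂0 : ∀ x, 0 ≤ p₂ x := fun x => hq₁0 _
  have hq₂0 : ∀ x, 0 ≤ q₂ x := fun x => hp₁0 _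
  have hmem1 : ∀ t ∈ Icc (0:ℝ) 1, (1 - t) ∈ Icc (0:ℝ) 1 := by
    intro t ht; exact ⟨by linarith [ht.2], by linarith [ht.1]⟩
  set C₂ : ℝ := B/|Λ₂| * Real.exp (2*K) with hC₂_def
  set C₃ : ℝ := A/Λ₁ * Real.exp (-(2*K)) with hC₃_def
  have hC₂0 : 0 ≤ C₂ := by positivity
  have hC₃0 : 0 ≤ C₃ := by positivity
  have hp₂_bd : ∀ t ∈ Icc (0:ℝ) 1, p₂ t ≤ C₂ * Real.exp ((-(2*K))*t) := by
    intro t ht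
    have h := hq₁_bd (1-t) (hmem1 t ht)
    refine h.trans (le_of_eq ?_)
    rw [show (2*K)*(1-t) = 2*K + (-(2*K))*t by ring, Real.exp_add, hC₂_def]
    ring
  have hq₂_bd : ∀ t ∈ Icc (0:ℝ) 1, q₂ t ≤ C₃ * Real.exp ((2*K)*t) := by
    intro t ht
    have h := hp₁_bd (1-t) (hmem1 t ht)
    refine h.trans (le_of_eq ?_)
    rw [show (-(2*K))*(1-t) = -(2*K) + (2*K)*t by ring, Real.exp_add, hC₃_def]
    ring
  set c₄ : ℝ := C₃ * ((Real.exp ((2*K)*1) - 1)/(2*K)) with hc₄_def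
  have hc₄0 : 0 ≤ c₄ := by
    apply mul_nonneg hC₃0
    apply div_nonneg _ (by positivity)
    have : (1:ℝ) ≤ Real.exp ((2*K)*1) := Real.one_le_exp (by positivity)
    linarith
  set σ₀ : ℝ := (1 - J)/(2*(1+c₄)) with hσ₀_def
  have hσ₀pos : 0 < σ₀ := by
    apply div_pos (by linarith) (by positivity)
  have hσ₀c₄ : σ₀ * c₄ ≤ (1 - J)/2 := by
    rw [hσ₀_def, div_mul_eq_mul_div, div_le_div_iff₀ (by positivity) two_pos]
    nlinarith
  have hint₂ : (∫ s in (0:ℝ)..1, q₂ s * (σ₀ + ∫ t in (0:ℝ)..s, p₂ t)) < 1 := by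
    have hIb := int_bound hp₂c hK'' hp₂0 hp₂_bd
    set G₂ : ℝ → ℝ := fun s => σ₀ * (C₃ * Real.exp ((2*K)*s)) + G s with hG₂_def
    have hG₂c : Continuous G₂ := (continuous_const.mul (continuous_const.mul
      (Real.continuous_exp.comp (continuous_const.mul continuous_id)))).add hGc
    have hptw : ∀ s ∈ Icc (0:ℝ) 1, q₂ s * (σ₀ + ∫ t in (0:ℝ)..s, p₂ t) ≤ G₂ s := by
      intro s hs
      obtain ⟨hI0, hIle⟩ := hIb s hs
      have h1 := hq₂_bd s hs
      have hX1 : (0:ℝ) ≤ C₃ * Real.exp ((2*K)*s) := by positivity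
      have hadd : 0 ≤ σ₀ + ∫ t in (0:ℝ)..s, p₂ t := by linarith
      have hmul := mul_le_mul h1 (add_le_add_right hIle σ₀) hadd hX1
      refine hmul.trans ?_
      rw [hG₂_def, mul_add]
      apply add_le_add
      · rw [mul_comm σ₀]
      · apply le_of_eq
        have hEmE : Real.exp (2*K*s) * Real.exp (-(2*K*s)) = 1 := by
          rw [← Real.exp_add, show 2*K*s + -(2*K*s) = 0 by ring, Real.exp_zero]
        have he2 : Real.exp (-(2*K)) * Real.exp (2*K) = 1 := by
          rw [← Real.exp_add]; simp
        have hre : Real.exp ((-(2*K))*s) = Real.exp (-(2*K*s)) := by congr 1; ring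
        rw [hG_def, hre, hC₂_def, hC₃_def]
        field_simp
        linear_combination (-(A*B)) * hEmE +
          (-(A*B) * Real.exp (2*K*s) * (Real.exp (-(2*K*s)) - 1)) * he2
    have hG₂int : (∫ s in (0:ℝ)..1, G₂ s) = σ₀ * c₄ + J := by
      rw [hG₂_def]
      have hie2 : IntervalIntegrable (fun s : ℝ => σ₀ * (C₃ * Real.exp ((2*K)*s))) volume 0 1 :=
        ((by fun_prop : Continuous fun s : ℝ => σ₀ * (C₃ * Real.exp ((2*K)*s)))).intervalIntegrable _ _
      rw [intervalIntegral.integral_add hie2 (hGc.intervalIntegrable _ _), hGint]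
      congr 1
      rw [intervalIntegral.integral_const_mul, intervalIntegral.integral_const_mul,
        integral_exp_mul (2*K) hK', hc₄_def]
      all_goals ring
    calc (∫ s in (0:ℝ)..1, q₂ s * (σ₀ + ∫ t in (0:ℝ)..s, p₂ t))
        ≤ ∫ s in (0:ℝ)..1, G₂ s := by
          apply intervalIntegral.integral_mono_on h01
            ((hq₂c.mul (continuous_const.add (cont_primitive hp₂c))).intervalIntegrable _ _)
            (hG₂c.intervalIntegrable _ _) hptw
      _ = σ₀ * c₄ + J := hG₂int
      _ < 1 := by linarith
  obtain ⟨U, V, hU0, hV0, hUd, hVd, hUVb⟩ :=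
    core p₂ q₂ hp₂c hq₂c hp₂0 hq₂0 σ₀ hσ₀pos.le hint₂
  -- Cond211
  refine ⟨?_, hηpart⟩
  -- the function σ = U/V and ζ(x) = σ(1-x)
  set σf : ℝ → ℝ := fun y => U y / V y with hσf_def
  have hσd : ∀ y ∈ Icc (0:ℝ) 1, HasDerivWithinAt σf (p₂ y + q₂ y * σf y ^ 2) (Icc 0 1) y := by
    intro y hy
    have hVpos := (hUVb y hy).1
    have hd := (hUd y hy).div (hVd y hy) (ne_of_gt hVpos)
    have heq : (p₂ y * V y * V y - U y * -(q₂ y * U y)) / V y ^ 2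
        = p₂ y + q₂ y * (U y / V y) ^ 2 := by
      field_simp
      ring
    rw [heq] at hd
    exact hd
  set ζ : ℝ → ℝ := fun x => σf (1 - x) with hζ_def
  have hζpos : ∀ x ∈ Icc (0:ℝ) 1, 0 < ζ x := by
    intro x hx
    have h1 := hUVb (1-x) (hmem1 x hx)
    exact div_pos (lt_of_lt_of_le hσ₀pos h1.2.2.1) h1.1
  have hζd : ∀ x ∈ Icc (0:ℝ) 1, HasDerivWithinAt ζ (-(q₁ x + p₁ x * ζ x ^ 2)) (Icc 0 1) x := by
    intro x hx
    have hmem := hmem1 x hx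
    have hcomp := HasDerivWithinAt.comp x (hσd (1-x) hmem)
      (((hasDerivAt_id x).const_sub 1).hasDerivWithinAt) (fun y hy => hmem1 y hy)
    refine hcomp.congr_deriv ?_
    simp only [hp₂_def, hq₂_def, hζ_def, sub_sub_cancel]
    ring
  have hζcont : ContinuousOn ζ (Icc 0 1) := fun x hx => (hζd x hx).continuousWithinAt
  set ζe : ℝ → ℝ := IccExtend h01 ((Icc (0:ℝ) 1).restrict ζ) with hζe_def
  have hζe_cont : Continuous ζe := hζcont.restrict.Icc_extend'
  have hζe_eq : ∀ x ∈ Icc (0:ℝ) 1, ζe x = ζ x := by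
    intro x hx; rw [hζe_def, IccExtend_of_mem h01 _ hx]; rfl
  have hζe_pos : ∀ x, 0 < ζe x := by
    intro x
    have hre : ζe x = ζ (projIcc 0 1 h01 x) := rfl
    rw [hre]
    exact hζpos _ (projIcc 0 1 h01 x).2
  set hfn : ℝ → ℝ := fun t => q₁ t / ζe t with hhfn_def
  have hhc : Continuous hfn := hq₁c.div hζe_cont (fun x => ne_of_gt (hζe_pos x))
  set f₂fun : ℝ → ℝ := fun x => Real.exp (2 * ∫ t in (0:ℝ)..x, hfn t) with hf₂_def
  have hf₂pos : ∀ x, 0 < f₂fun x := fun x => Real.exp_pos _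
  have hf₂d : ∀ x, HasDerivAt f₂fun (f₂fun x * (2 * hfn x)) x := by
    intro x
    exact ((ftc0 hhc x).const_mul 2).exp
  have hf₂cont : Continuous f₂fun :=
    Real.continuous_exp.comp (continuous_const.mul (cont_primitive hhc))
  set F₂' : ℝ → ℝ := fun x => f₂fun x * (2 * hfn x) with hF₂'_def
  have hF₂'c : Continuous F₂' := hf₂cont.mul (continuous_const.mul hhc)
  set f₁fun : ℝ → ℝ := fun x => ζe x ^ 2 * f₂fun x with hf₁_def
  set Zd : ℝ → ℝ := fun x => -(q₁ x + p₁ x * ζe x ^ 2) with hZd_def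
  have hZdc : Continuous Zd := ((hq₁c.add (hp₁c.mul (hζe_cont.pow 2))).neg)
  set F₁' : ℝ → ℝ := fun x => 2 * ζe x * Zd x * f₂fun x + ζe x ^ 2 * F₂' x with hF₁'_def
  have hF₁'c : Continuous F₁' :=
    (((continuous_const.mul hζe_cont).mul hZdc).mul hf₂cont).add ((hζe_cont.pow 2).mul hF₂'c)
  have hζe_d : ∀ x ∈ Icc (0:ℝ) 1, HasDerivWithinAt ζe (Zd x) (Icc 0 1) x := by
    intro x hx
    have h := (hζd x hx).congr (fun y hy => hζe_eq y hy) (hζe_eq x hx)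
    show HasDerivWithinAt ζe (-(q₁ x + p₁ x * ζe x ^ 2)) (Icc 0 1) x
    rw [hζe_eq x hx]
    exact h
  have hf₁d : ∀ x ∈ Icc (0:ℝ) 1, HasDerivWithinAt f₁fun (F₁' x) (Icc 0 1) x := by
    intro x hx
    have h2 := (hζe_d x hx).pow 2
    have h3 := h2.mul ((hf₂d x).hasDerivWithinAt)
    refine h3.congr_deriv ?_
    symm
    show F₁' x = _
    simp only [hF₁'_def, hF₂'_def]
    push_cast
    simp only [Pi.pow_apply]
    ring
  -- the two differential inequalities
  have hsqrtE : ∀ x, Real.sqrt (f₂fun x) ≠ 0 := fun x => ne_of_gt (Real.sqrt_pos.2 (hf₂pos x))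
  have h32 : ∀ x, (ζe x ^ 2 * f₂fun x) ^ ((3:ℝ)/2)
      = ζe x ^ 3 * (f₂fun x * Real.sqrt (f₂fun x)) := by
    intro x
    have ht : (0:ℝ) < ζe x ^ 2 * f₂fun x := by
      have := hζe_pos x; have := hf₂pos x; positivity
    rw [show (3:ℝ)/2 = 1 + 1/2 by norm_num, Real.rpow_add ht, Real.rpow_one,
      ← Real.sqrt_eq_rpow, Real.sqrt_mul (by positivity : (0:ℝ) ≤ ζe x ^ 2),
      Real.sqrt_sq (le_of_lt (hζe_pos x))]
    ring
  have h32' : ∀ x, (f₂fun x) ^ ((3:ℝ)/2) = f₂fun x * Real.sqrt (f₂fun x) := by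
    intro x
    rw [show (3:ℝ)/2 = 1 + 1/2 by norm_num, Real.rpow_add (hf₂pos x), Real.rpow_one,
      ← Real.sqrt_eq_rpow]
  have hineq1 : ∀ x ∈ Icc (0:ℝ) 1,
      Λ₁ * F₁' x ≤ -2 * |a x| * f₁fun x ^ ((3:ℝ)/2) / Real.sqrt (f₂fun x) := by
    intro x hx
    apply le_of_eq
    have hZ := hζe_pos x
    have hE := hf₂pos x
    have hRHS : -2 * |a x| * (ζe x ^ 3 * (f₂fun x * Real.sqrt (f₂fun x))) / Real.sqrt (f₂fun x)
        = -2 * |a x| * ζe x ^ 3 * f₂fun x := by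
      field_simp [hsqrtE x]
    have hLHS : Λ₁ * F₁' x = -2 * |a x| * ζe x ^ 3 * f₂fun x := by
      simp only [hF₁'_def, hF₂'_def, hZd_def, hhfn_def, hp₁_def, hq₁_def]
      rw [hae_eq x hx]
      field_simp
      ring
    simp only [hf₁_def]
    rw [h32 x, hRHS, hLHS]
  have hineq2 : ∀ x ∈ Icc (0:ℝ) 1,
      Λ₂ * F₂' x ≤ -2 * |b x| * f₂fun x ^ ((3:ℝ)/2) / Real.sqrt (f₁fun x) := by
    intro x hx
    apply le_of_eq
    have hZ := hζe_pos x
    have hE := hf₂pos x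
    have habs : |Λ₂| = -Λ₂ := abs_of_neg hΛ₂
    have hsq1 : Real.sqrt (f₁fun x) = ζe x * Real.sqrt (f₂fun x) := by
      simp only [hf₁_def]
      rw [Real.sqrt_mul (by positivity : (0:ℝ) ≤ ζe x ^ 2),
        Real.sqrt_sq (le_of_lt hZ)]
    have hRHS : -2 * |b x| * (f₂fun x * Real.sqrt (f₂fun x)) /
        (ζe x * Real.sqrt (f₂fun x)) = -2 * |b x| * f₂fun x / ζe x := by
      rw [div_eq_div_iff (by positivity) (ne_of_gt hZ)]
      field_simp
    have hLHS : Λ₂ * F₂' x = -2 * |b x| * f₂fun x / ζe x := by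
      simp only [hF₂'_def, hhfn_def, hq₁_def]
      rw [hbe_eq x hx, habs]
      field_simp [ne_of_lt hΛ₂, ne_of_gt hZ]
    rw [h32' x, hsq1, hRHS, hLHS]
  refine ⟨f₁fun, f₂fun, F₁', F₂', hF₁'c.continuousOn, hF₂'c.continuousOn, hf₁d,
    (fun x _ => (hf₂d x).hasDerivWithinAt), ?_, hineq1, hineq2, 1, 1, one_pos, one_pos, ?_⟩
  · intro x _
    exact ⟨mul_pos (pow_pos (hζe_pos x) 2) (hf₂pos x), hf₂pos x⟩
  · have h1 : 0 < f₁fun 1 := mul_pos (pow_pos (hζe_pos 1) 2) (hf₂pos 1)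
    have h0 : 0 < f₁fun 0 := mul_pos (pow_pos (hζe_pos 0) 2) (hf₂pos 0)
    have h2 : 0 < f₂fun 0 := hf₂pos 0
    have h3 : 0 < f₂fun 1 := hf₂pos 1
    simp only [one_pow, div_one, abs_zero, zero_mul, zero_div, max_self]
    exact div_pos (lt_min h1 h2) (lt_of_lt_of_le h0 (le_max_left _ _))
end

section
/- For every Y ∈ (0,1) and every Z ∈ (√Y, 1/√Y), one has π/2 − arctan( (Z − √Y)² ) − arctan( (1/Z − √Y)² ) > Y. -/
open Real

lemma aux1 (s Z : ℝ) (hZ : Z ≠ 0) :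
    (Z - s) * (1 / Z - s) = 1 - (s * Z + s / Z - s ^ 2) := by
  field_simp; ring

lemma aux2 (s Z : ℝ) (hZ : Z ≠ 0) :
    (Z - s) ^ 2 * ((1 / Z - s) ^ 2) = (1 - (s * Z + s / Z - s ^ 2)) ^ 2 := by
  rw [← mul_pow, aux1 s Z hZ]

lemma aux3 (s Z : ℝ) (hZ : Z ≠ 0) :
    s ^ 2 * ((Z - s) ^ 2 + (1 / Z - s) ^ 2)
      = (s * Z + s / Z - s ^ 2) ^ 2 + s ^ 4 - 2 * s ^ 2 := by
  field_simp; ring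

lemma aux4 (s Z : ℝ) (hZ : 0 < Z) :
    (s * Z + s / Z - s ^ 2) - (2 * s - s ^ 2) = s * (Z - 1) ^ 2 / Z := by
  field_simp; ring

lemma auxfl (s : ℝ) (hs0 : 0 < s) (hs1 : s < 1) :
    0 < (2 * s - s ^ 2) * (2 - (2 * s - s ^ 2)) * (1 - s ^ 4 / 2)
      - ((2 * s - s ^ 2) ^ 2 + s ^ 4 - 2 * s ^ 2) := by
  nlinarith [sq_nonneg (1 - s), sq_nonneg s, sq_nonneg (s * (1 - s)),
    sq_nonneg (s ^ 2 * (1 - s)), sq_nonneg (s ^ 2), mul_pos hs0 hs0,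
    pow_lt_one₀ hs0.le hs1 (by norm_num : (4:ℕ) ≠ 0)]

/-- The key concavity estimate: for `0 < s < 1` and `q ∈ [2s - s², 1)`,
`q² + s⁴ - 2s² < q(2-q)(1 - s⁴/2)`. -/
lemma concave_aux (s q : ℝ) (hs0 : 0 < s) (hs1 : s < 1)
    (hql : 0 ≤ q - (2 * s - s ^ 2)) (hq1 : 0 < 1 - q) :
    q ^ 2 + s ^ 4 - 2 * s ^ 2 < q * (2 - q) * (1 - s ^ 4 / 2) := by
  have hfl := auxfl s hs0 hs1
  have hf1 : 0 < 1 * (2 - 1) * (1 - s ^ 4 / 2) - (1 + s ^ 4 - 2 * s ^ 2) := by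
    nlinarith [mul_pos hs0 hs0,
      (by nlinarith [mul_pos (pow_pos hs0 2) (show (0:ℝ) < 1 - s ^ 2 by nlinarith)] :
        s ^ 4 < s ^ 2)]
  have h1l : 0 < 1 - (2 * s - s ^ 2) := by nlinarith [sq_nonneg (1 - s)]
  have hkey : 0 < (1 - (2 * s - s ^ 2)) *
      (q * (2 - q) * (1 - s ^ 4 / 2) - (q ^ 2 + s ^ 4 - 2 * s ^ 2)) := by
    nlinarith [mul_pos hq1 hfl, mul_nonneg hql hf1.le,
      mul_nonneg (mul_nonneg hql hq1.le) (by nlinarith : (0:ℝ) ≤ 2 - s ^ 4 / 2)]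
  nlinarith [hkey, h1l]

/-- `tan y < y / (1 - y^2/2)` for `0 < y < 1`. -/
lemma tan_lt_aux {y : ℝ} (h0 : 0 < y) (h1 : y < 1) :
    Real.tan y < y / (1 - y ^ 2 / 2) := by
  have hden : (0:ℝ) < 1 - y ^ 2 / 2 := by nlinarith
  have hcos : 1 - y ^ 2 / 2 < Real.cos y := Real.one_sub_sq_div_two_lt_cos h0.ne'
  have hcos0 : 0 < Real.cos y := lt_trans hden hcos
  have hsin : Real.sin y < y := Real.sin_lt h0
  have hsin0 : 0 < Real.sin y :=
    Real.sin_pos_of_pos_of_lt_pi h0 (by nlinarith [Real.pi_gt_three])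
  rw [Real.tan_eq_sin_div_cos, div_lt_div_iff₀ hcos0 hden]
  nlinarith

/-- Comparison of `tan Y` with `(1 - AB)/(A + B)`, in abstract form. -/
lemma compare_aux (Y P A B : ℝ) (hY0 : 0 < Y) (hY1 : Y < 1) (hABpos : 0 < A + B)
    (hsum : Y * (A + B) = P ^ 2 + Y ^ 2 - 2 * Y)
    (hab : 1 - A * B = P * (2 - P))
    (main : P ^ 2 + Y ^ 2 - 2 * Y < P * (2 - P) * (1 - Y ^ 2 / 2)) :
    Real.tan Y < (1 - A * B) / (A + B) := by
  have hden : (0:ℝ) < 1 - Y ^ 2 / 2 := by nlinarith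
  refine lt_trans (tan_lt_aux hY0 hY1) ?_
  rw [div_lt_div_iff₀ hden hABpos, hsum, hab]
  linarith [main]

set_option maxHeartbeats 800000 in
/-- For every `Y ∈ (0,1)` and every `Z ∈ (√Y, 1/√Y)`,
`π/2 - arctan((Z - √Y)²) - arctan((1/Z - √Y)²) > Y`. -/
theorem key_inequality (Y Z : ℝ) (hY : Y ∈ Set.Ioo (0 : ℝ) 1)
    (hZ : Z ∈ Set.Ioo (Real.sqrt Y) (1 / Real.sqrt Y)) :
    Y < Real.pi / 2 - Real.arctan ((Z - Real.sqrt Y) ^ 2)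
        - Real.arctan ((1 / Z - Real.sqrt Y) ^ 2) := by
  obtain ⟨hY0, hY1⟩ := hY
  obtain ⟨hZl, hZr⟩ := hZ
  set s := Real.sqrt Y with hs
  have hs0 : 0 < s := Real.sqrt_pos.mpr hY0
  have hs1 : s < 1 := by
    rw [hs, show (1:ℝ) = Real.sqrt 1 by simp]
    exact Real.sqrt_lt_sqrt hY0.le hY1
  have hsY : s ^ 2 = Y := Real.sq_sqrt hY0.le
  have hZ0 : 0 < Z := lt_trans hs0 hZl
  have hZne : Z ≠ 0 := ne_of_gt hZ0
  have hiZ : s < 1 / Z := by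
    rw [lt_div_iff₀ hZ0]
    have h := (lt_div_iff₀ hs0).mp hZr
    nlinarith
  set a := (Z - s) ^ 2 with hadef
  set b := (1 / Z - s) ^ 2 with hbdef
  have hZs : 0 < Z - s := by linarith
  have hiZs : 0 < 1 / Z - s := by linarith
  have ha0 : 0 < a := pow_pos hZs 2
  have hb0 : 0 < b := pow_pos hiZs 2
  have h1p : 0 < 1 - (s * Z + s / Z - s ^ 2) := by
    rw [← aux1 s Z hZne]; exact mul_pos hZs hiZs
  have hpl : 0 ≤ (s * Z + s / Z - s ^ 2) - (2 * s - s ^ 2) := by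
    rw [aux4 s Z hZ0]; positivity
  have hab : a * b = (1 - (s * Z + s / Z - s ^ 2)) ^ 2 := aux2 s Z hZne
  have hsum : s ^ 2 * (a + b)
      = (s * Z + s / Z - s ^ 2) ^ 2 + s ^ 4 - 2 * s ^ 2 := aux3 s Z hZne
  have main := concave_aux s (s * Z + s / Z - s ^ 2) hs0 hs1 hpl h1p
  have hp0 : 0 < s * Z + s / Z - s ^ 2 := by
    nlinarith [mul_pos hs0 (show (0:ℝ) < 2 - s by linarith)]
  -- arctan manipulations
  have hab1 : a * b < 1 := by nlinarith
  have hsumpos : 0 < a + b := by linarith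
  have h1ab : 0 < 1 - a * b := by linarith
  have harc : Real.arctan a + Real.arctan b =
      Real.arctan ((a + b) / (1 - a * b)) := Real.arctan_add hab1
  set v := (a + b) / (1 - a * b) with hv
  have hv0 : 0 < v := div_pos hsumpos h1ab
  have hinv : Real.arctan v⁻¹ = Real.pi / 2 - Real.arctan v :=
    Real.arctan_inv_of_pos hv0
  have hvinv : v⁻¹ = (1 - a * b) / (a + b) := by rw [hv, inv_div]
  -- comparison with tan Y
  set P := s * Z + s / Z - s ^ 2 with hPdef
  have hs4 : s ^ 4 = Y ^ 2 := by rw [← hsY]; ring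
  have hsumY : Y * (a + b) = P ^ 2 + Y ^ 2 - 2 * Y := by
    rw [← hsY]
    linear_combination hsum
  have habY : 1 - a * b = P * (2 - P) := by
    linear_combination -hab
  rw [hs4, hsY] at main
  have htan : Real.tan Y < (1 - a * b) / (a + b) :=
    compare_aux Y P a b hY0 hY1 hsumpos hsumY habY main
  have hYpi : Y < Real.pi / 2 := by nlinarith [Real.pi_gt_three]
  have hfin : Y < Real.arctan v⁻¹ := by
    calc Y = Real.arctan (Real.tan Y) :=
          (Real.arctan_tan (by linarith) hYpi).symm
      _ < Real.arctan v⁻¹ := Real.arctan_strictMono (hvinv ▸ htan)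
  rw [hinv, ← harc] at hfin
  linarith
end
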